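/- arXiv:1208.3885 — 6 statements merged into one kernel-verified Lean document; each statement's English description precedes it below -/
import Mathlib

section
/- Let N be a Poisson distributed random variable with parameter λ satisfying 0 ≤ λ ≤ 1. Then for every p with 2 ≤ p < ∞ there exists a constant b_p > 0 (depending only on p) such that E|N − λ|^p ≥ b_p · λ. -/
open MeasureTheory ProbabilityTheory Real

open scoped NNReal Nat

/-! Already the terms `n = 1, 2` of the series `E|N - λ|^p = ∑ e^{-λ} λ^n / n! · |n - λ|^p`
give the bound: they are at least `e^{-1} λ ((1 - λ)^p + λ / 2)`, and `(1 - λ)^p + λ / 2 ≥ 2^{-p}`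
because either `λ ≤ 1/2` or `λ / 2 ≥ 1/4 ≥ 2^{-p}`. The remaining terms are nonnegative, and the
series converges since `|n - λ|^p` grows at most exponentially in `n`. -/

lemma abs_sub_rpow_le_exp {x y p : ℝ} (hx : 0 ≤ x) (hy : 0 ≤ y) (hp : 0 ≤ p) :
    |x - y| ^ p ≤ exp (p * y) * exp p ^ x := by
  have h : |x - y| ≤ exp (x + y) := calc
    |x - y| ≤ x + y + 1 := by rw [abs_sub_le_iff]; constructor <;> linarith
    _ ≤ exp (x + y) := add_one_le_exp _
  calc |x - y| ^ p ≤ exp (x + y) ^ p := rpow_le_rpow (abs_nonneg _) h hp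
    _ = exp (p * y) * exp p ^ x := by
      rw [← exp_mul, ← exp_mul, ← exp_add]; ring_nf

lemma half_rpow_le_one_sub_rpow_add_half {x p : ℝ} (hx₀ : 0 ≤ x) (hx₁ : x ≤ 1) (hp : 2 ≤ p) :
    (1 / 2) ^ p ≤ (1 - x) ^ p + x / 2 := by
  rcases le_or_gt x (1 / 2) with hx | hx
  · have := rpow_le_rpow (by norm_num) (by linarith : 1 / 2 ≤ 1 - x) (by linarith : 0 ≤ p)
    linarith
  · have h : (1 / 2 : ℝ) ^ p ≤ (1 / 2) ^ (2 : ℝ) :=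
      rpow_le_rpow_of_exponent_ge (by norm_num) (by norm_num) hp
    have := rpow_nonneg (by linarith : 0 ≤ 1 - x) p
    norm_num at h ⊢
    linarith

namespace ProbabilityTheory

lemma integrable_abs_sub_rpow_poissonMeasure (r : ℝ≥0) {p : ℝ} (hp : 0 ≤ p) :
    Integrable (fun n : ℕ ↦ |(n : ℝ) - r| ^ p) (poissonMeasure r) := by
  rw [integrable_poissonMeasure_iff]
  refine .of_nonneg_of_le (fun n ↦ by positivity) (fun n ↦ ?_)
    ((summable_pow_div_factorial (r * exp p)).mul_left (exp (-r) * exp (p * r)))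
  have h := abs_sub_rpow_le_exp n.cast_nonneg r.coe_nonneg hp
  rw [rpow_natCast] at h
  rw [norm_of_nonneg (by positivity), mul_pow]
  calc exp (-r) * r ^ n / n ! * |(n : ℝ) - r| ^ p
      ≤ exp (-r) * r ^ n / n ! * (exp (p * r) * exp p ^ n) := by gcongr
    _ = _ := by ring

lemma sum_le_integral_poissonMeasure {r : ℝ≥0} {f : ℕ → ℝ} (hf : Integrable f (poissonMeasure r))
    (hf₀ : ∀ n, 0 ≤ f n) (s : Finset ℕ) :
    ∑ n ∈ s, exp (-r) * r ^ n / n ! * f n ≤ ∫ n, f n ∂poissonMeasure r :=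
  sum_le_hasSum s (fun n _ ↦ mul_nonneg (by positivity) (hf₀ n))
    (hasSum_integral_poissonMeasure hf)

end ProbabilityTheory

/-- For every `2 ≤ p < ∞` there is a constant `b_p > 0` such that for a Poisson
random variable `N` with parameter `0 ≤ λ ≤ 1` one has `E|N - λ|^p ≥ b_p · λ`. -/
theorem poisson_central_moment_lower_bound (p : ℝ) (hp : 2 ≤ p) :
    ∃ b : ℝ, 0 < b ∧ ∀ lam : NNReal, lam ≤ 1 →
      b * (lam : ℝ) ≤ ∫ n : ℕ, |(n : ℝ) - (lam : ℝ)| ^ p ∂(poissonMeasure lam) := by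
  refine ⟨exp (-1) * (1 / 2) ^ p, by positivity, fun lam hlam ↦ ?_⟩
  have hmoment := sum_le_integral_poissonMeasure
    (integrable_abs_sub_rpow_poissonMeasure lam (by linarith : 0 ≤ p))
    (fun n ↦ rpow_nonneg (abs_nonneg _) p) {1, 2}
  have hl₀ : 0 ≤ (lam : ℝ) := lam.coe_nonneg
  have hl₁ : (lam : ℝ) ≤ 1 := by exact_mod_cast hlam
  set l : ℝ := (lam : ℝ)
  rw [Finset.sum_pair (by norm_num)] at hmoment
  norm_num [abs_of_nonneg (by linarith : 0 ≤ 1 - l), abs_of_nonneg (by linarith : 0 ≤ 2 - l)]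
    at hmoment
  calc exp (-1) * (1 / 2) ^ p * l ≤ exp (-1) * ((1 - l) ^ p + l / 2) * l := by
        gcongr; exact half_rpow_le_one_sub_rpow_add_half hl₀ hl₁ hp
    _ = exp (-1) * l * (1 - l) ^ p + exp (-1) * l ^ 2 / 2 * 1 := by ring
    _ ≤ exp (-l) * l * (1 - l) ^ p + exp (-l) * l ^ 2 / 2 * (2 - l) ^ p := by
        gcongr
        exact one_le_rpow (by linarith) (by linarith)
    _ ≤ _ := hmoment
end

section
/- Let N be a Poisson distributed random variable with parameter λ satisfying 0 ≤ λ ≤ 1. Then for every p with 1 ≤ p < ∞ there exists a constant c_p > 0 (depending only on p) such that E|N − λ|^p ≤ c_p · λ. -/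
/-!
For `n ≥ 1` and `λ ≤ 1` we have `P(N = n) ≤ λⁿ/n! ≤ λ/n!` and `|n - λ|^p ≤ n^p ≤ (2^⌈p⌉)ⁿ`, while the
term `n = 0` contributes at most `λ^p ≤ λ`. Summing, `E|N - λ|^p ≤ λ · Σ (2^⌈p⌉)ⁿ/n! = exp (2^⌈p⌉) · λ`.
-/

open MeasureTheory ProbabilityTheory Real
open scoped Nat

theorem integral_le_tsum_of_measureReal_singleton_mul_le {X : Type*} [MeasurableSpace X]
    [MeasurableSingletonClass X] [Countable X] {μ : Measure X} [IsFiniteMeasure μ]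
    {f g : X → ℝ} (hf : 0 ≤ f) (hg : Summable g) (hfg : ∀ x, μ.real {x} * f x ≤ g x) :
    ∫ x, f x ∂μ ≤ ∑' x, g x := by
  have hsum : Summable fun x ↦ μ.real {x} * ‖f x‖ := by
    refine hg.of_nonneg_of_le (fun x ↦ by positivity) fun x ↦ ?_
    simpa only [Real.norm_of_nonneg (hf x)] using hfg x
  have hint : Integrable f μ := by
    rw [← Measure.sum_smul_dirac μ]
    exact integrable_sum_dirac (fun x ↦ measure_ne_top μ {x}) hsum
  rw [integral_countable hint]
  refine Summable.tsum_le_tsum (fun x ↦ hfg x) ?_ hg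
  simpa only [smul_eq_mul, Real.norm_of_nonneg (hf _)] using hsum

theorem poissonMeasure_real_singleton_le (r : NNReal) (n : ℕ) :
    (poissonMeasure r).real {n} ≤ (r : ℝ) ^ n / n ! := by
  rw [poissonMeasure_real_singleton, mul_div_assoc]
  exact mul_le_of_le_one_left (by positivity) (exp_le_one_iff.mpr (by simp))

theorem natCast_rpow_le_two_pow_ceil_pow {n : ℕ} (hn : 1 ≤ n) (p : ℝ) :
    (n : ℝ) ^ p ≤ ((2 : ℝ) ^ ⌈p⌉₊) ^ n := by
  have hn' : (1 : ℝ) ≤ n := by exact_mod_cast hn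
  calc (n : ℝ) ^ p ≤ (n : ℝ) ^ (⌈p⌉₊ : ℝ) := rpow_le_rpow_of_exponent_le hn' (Nat.le_ceil p)
    _ = (n : ℝ) ^ ⌈p⌉₊ := rpow_natCast _ _
    _ ≤ ((2 : ℝ) ^ n) ^ ⌈p⌉₊ := by gcongr; exact_mod_cast n.lt_two_pow_self.le
    _ = ((2 : ℝ) ^ ⌈p⌉₊) ^ n := by rw [← pow_mul, ← pow_mul, mul_comm]

theorem Real.hasSum_pow_div_factorial (x : ℝ) : HasSum (fun n ↦ x ^ n / n !) (exp x) := by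
  rw [exp_eq_exp_ℝ]
  exact NormedSpace.expSeries_div_hasSum_exp x

theorem poissonMeasure_real_singleton_mul_abs_sub_rpow_le {r : NNReal} (hr : r ≤ 1) {p : ℝ}
    (hp : 1 ≤ p) (n : ℕ) :
    (poissonMeasure r).real {n} * |(n : ℝ) - r| ^ p ≤ r * (((2 : ℝ) ^ ⌈p⌉₊) ^ n / n !) := by
  have hr0 : (0 : ℝ) ≤ r := r.coe_nonneg
  have hr1 : (r : ℝ) ≤ 1 := by exact_mod_cast hr
  rcases Nat.eq_zero_or_pos n with rfl | hn
  · calc (poissonMeasure r).real {0} * |((0 : ℕ) : ℝ) - r| ^ p ≤ 1 * (r : ℝ) ^ p := by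
          rw [Nat.cast_zero, zero_sub, abs_neg, abs_of_nonneg hr0]
          gcongr
          exact measureReal_le_one
      _ ≤ r * (((2 : ℝ) ^ ⌈p⌉₊) ^ 0 / (0)!) := by
          simpa using rpow_le_self_of_le_one hr0 hr1 hp
  · have hn' : (1 : ℝ) ≤ n := by exact_mod_cast hn
    calc (poissonMeasure r).real {n} * |(n : ℝ) - r| ^ p
        ≤ (r : ℝ) ^ n / n ! * (n : ℝ) ^ p := by
          gcongr
          · exact poissonMeasure_real_singleton_le r n
          · rw [abs_of_nonneg (by linarith)]; linarith
      _ ≤ r / n ! * ((2 : ℝ) ^ ⌈p⌉₊) ^ n := by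
          gcongr
          · exact pow_le_of_le_one hr0 hr1 hn.ne'
          · exact natCast_rpow_le_two_pow_ceil_pow hn p
      _ = r * (((2 : ℝ) ^ ⌈p⌉₊) ^ n / n !) := by ring

/-- For every `1 ≤ p < ∞` there is a constant `c_p > 0` such that for a Poisson
random variable `N` with parameter `0 ≤ λ ≤ 1` one has `E|N - λ|^p ≤ c_p · λ`. -/
theorem poisson_central_moment_upper_bound (p : ℝ) (hp : 1 ≤ p) :
    ∃ c : ℝ, 0 < c ∧ ∀ lam : NNReal, lam ≤ 1 →
      (∫ n : ℕ, |(n : ℝ) - (lam : ℝ)| ^ p ∂(poissonMeasure lam)) ≤ c * (lam : ℝ) := by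
  set x : ℝ := (2 : ℝ) ^ ⌈p⌉₊
  refine ⟨exp x, exp_pos x, fun lam hlam ↦ ?_⟩
  have hsum : HasSum (fun n ↦ (lam : ℝ) * (x ^ n / n !)) (lam * exp x) :=
    (hasSum_pow_div_factorial x).mul_left (lam : ℝ)
  calc ∫ n : ℕ, |(n : ℝ) - (lam : ℝ)| ^ p ∂(poissonMeasure lam)
      ≤ ∑' n : ℕ, (lam : ℝ) * (x ^ n / n !) :=
        integral_le_tsum_of_measureReal_singleton_mul_le (fun n ↦ by positivity)
          hsum.summable (poissonMeasure_real_singleton_mul_abs_sub_rpow_le hlam hp)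
    _ = exp x * lam := by rw [hsum.tsum_eq, mul_comm]
end

section
/- Let N be a Poisson distributed random variable with parameter λ ≥ 0 and let n be a positive even integer. Then the n-th central moment E(N − λ)^n can be written as λ · p_n(λ) for some polynomial p_n with nonnegative coefficients. -/
/-!
Stein's identity `E[N f(N)] = λ E[f(N + 1)]` for `N ~ Poisson(λ)`, applied to `f(k) = (k - λ)^n`,
gives `E(N - λ)^(n+1) = λ (E(N + 1 - λ)^n - E(N - λ)^n)`; expanding `(N - λ + 1)^n` binomially yields
the recurrence `μ_(n+1) = λ ∑_(j<n) (n choose j) μ_j`, `μ_0 = 1`, for the central moments.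
So `μ_n` is a polynomial in `λ` with natural-number coefficients, and `λ` divides it for `n ≥ 1`.
-/

open MeasureTheory ProbabilityTheory Real Polynomial
open scoped NNReal Nat

namespace ProbabilityTheory

lemma integrable_exp_mul_natCast_poissonMeasure (r : ℝ≥0) (t : ℝ) :
    Integrable (fun k : ℕ ↦ exp (t * k)) (poissonMeasure r) := by
  refine integrable_poissonMeasure_iff.2 <|
    ((summable_pow_div_factorial (r * exp t)).mul_left (exp (-r))).congr fun k ↦ ?_
  rw [norm_of_nonneg (exp_pos _).le, mul_comm t, exp_nat_mul, mul_pow]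
  ring

lemma integrable_pow_natCast_poissonMeasure (r : ℝ≥0) (m : ℕ) :
    Integrable (fun k : ℕ ↦ (k : ℝ) ^ m) (poissonMeasure r) := by
  refine ((integrable_exp_mul_natCast_poissonMeasure r 1).const_mul m !).mono'
    .of_discrete (.of_forall fun k ↦ ?_)
  have := pow_div_factorial_le_exp k k.cast_nonneg m
  rw [div_le_iff₀ (by positivity)] at this
  simpa [mul_comm] using this

lemma integrable_eval_natCast_poissonMeasure (r : ℝ≥0) (p : ℝ[X]) :
    Integrable (fun k : ℕ ↦ p.eval (k : ℝ)) (poissonMeasure r) := by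
  simp_rw [eval_eq_sum_range]
  exact integrable_finsetSum _ fun i _ ↦ (integrable_pow_natCast_poissonMeasure r i).const_mul _

-- No integrability is needed: both integrals are `tsum`s, related by reindexing `k ↦ k + 1`.
lemma integral_natCast_mul_poissonMeasure (r : ℝ≥0) (f : ℕ → ℝ) :
    ∫ k, (k : ℝ) * f k ∂poissonMeasure r = r * ∫ k, f (k + 1) ∂poissonMeasure r := by
  simp only [integral_poissonMeasure, smul_eq_mul, ← tsum_mul_left]
  rw [← tsum_pnat_eq_tsum_of_eq_zero (by simp), tsum_pnat_eq_tsum_succ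
    (f := fun k : ℕ ↦ exp (-r) * r ^ k / k ! * (k * f k))]
  congr 1 with k
  rw [Nat.factorial_succ, pow_succ]
  push_cast
  field_simp

lemma integrable_sub_pow_poissonMeasure (r : ℝ≥0) (n : ℕ) :
    Integrable (fun k : ℕ ↦ ((k : ℝ) - r) ^ n) (poissonMeasure r) := by
  have := integrable_eval_natCast_poissonMeasure r ((X - C (r : ℝ)) ^ n)
  simpa only [eval_pow, eval_sub, eval_X, eval_C] using this

lemma integral_sub_pow_succ_poissonMeasure (r : ℝ≥0) (n : ℕ) :
    ∫ k, ((k : ℝ) - r) ^ (n + 1) ∂poissonMeasure r =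
      r * ∑ j ∈ Finset.range n, n.choose j * ∫ k, ((k : ℝ) - r) ^ j ∂poissonMeasure r := by
  have hshift : ∫ k, ((((k + 1 : ℕ) : ℝ) - r) ^ n) ∂poissonMeasure r =
      ∑ j ∈ Finset.range (n + 1), n.choose j * ∫ k, ((k : ℝ) - r) ^ j ∂poissonMeasure r := by
    simp_rw [Nat.cast_succ, add_sub_right_comm, add_pow, one_pow, mul_one]
    rw [integral_finsetSum _ fun j _ ↦ (integrable_sub_pow_poissonMeasure r j).mul_const _]
    simp_rw [integral_mul_const, mul_comm]
  have hmul : Integrable (fun k : ℕ ↦ (k : ℝ) * ((k : ℝ) - r) ^ n) (poissonMeasure r) := by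
    have := integrable_eval_natCast_poissonMeasure r (X * (X - C (r : ℝ)) ^ n)
    simpa only [eval_mul, eval_pow, eval_sub, eval_X, eval_C] using this
  calc ∫ k, ((k : ℝ) - r) ^ (n + 1) ∂poissonMeasure r
      = ∫ k, (k : ℝ) * ((k : ℝ) - r) ^ n ∂poissonMeasure r
          - r * ∫ k, ((k : ℝ) - r) ^ n ∂poissonMeasure r := by
        rw [← integral_const_mul, ← integral_sub hmul
          ((integrable_sub_pow_poissonMeasure r n).const_mul _)]
        congr with k
        ring
    _ = _ := by
        rw [integral_natCast_mul_poissonMeasure, hshift, Finset.sum_range_succ, Nat.choose_self]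
        push_cast
        ring

noncomputable def poissonCentralMomentPoly : ℕ → ℕ[X]
  | 0 => 1
  | n + 1 => X * ∑ j : Fin n, n.choose j • poissonCentralMomentPoly j

lemma aeval_poissonCentralMomentPoly (r : ℝ≥0) (n : ℕ) :
    aeval (r : ℝ) (poissonCentralMomentPoly n) = ∫ k, ((k : ℝ) - r) ^ n ∂poissonMeasure r := by
  induction n using Nat.strong_induction_on with
  | _ n ih =>
    cases n with
    | zero => simp [poissonCentralMomentPoly]
    | succ n =>
      rw [poissonCentralMomentPoly, integral_sub_pow_succ_poissonMeasure, map_mul, aeval_X,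
        map_sum, ← Fin.sum_univ_eq_sum_range]
      simp [ih _ (Nat.lt_succ_of_lt _)]

end ProbabilityTheory

theorem poisson_central_moment_even_polynomial_general (n : ℕ) (hn0 : 0 < n) :
    ∃ P : Polynomial ℝ, (∀ k, 0 ≤ P.coeff k) ∧
      ∀ lam : NNReal,
        ∫ k : ℕ, ((k : ℝ) - (lam : ℝ)) ^ n ∂(poissonMeasure lam)
          = (lam : ℝ) * P.eval (lam : ℝ) := by
  obtain ⟨m, rfl⟩ := Nat.exists_eq_add_one_of_ne_zero hn0.ne'
  refine ⟨(∑ j : Fin m, m.choose j • poissonCentralMomentPoly j).map (algebraMap ℕ ℝ),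
    fun k ↦ ?_, fun lam ↦ ?_⟩
  · rw [coeff_map]
    positivity
  · rw [eval_map_algebraMap, ← aeval_poissonCentralMomentPoly, poissonCentralMomentPoly,
      map_mul, aeval_X]

/-- For a Poisson random variable `N` with parameter `λ ≥ 0` and a positive even
integer `n`, the `n`-th central moment `E (N - λ)^n` equals `λ · p_n(λ)` for a
polynomial `p_n` with nonnegative coefficients. -/
theorem poisson_central_moment_even_polynomial (n : ℕ) (hn : Even n) (hn0 : 0 < n) :
    ∃ P : Polynomial ℝ, (∀ k, 0 ≤ P.coeff k) ∧
      ∀ lam : NNReal,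
        ∫ k : ℕ, ((k : ℝ) - (lam : ℝ)) ^ n ∂(poissonMeasure lam)
          = (lam : ℝ) * P.eval (lam : ℝ) :=
  poisson_central_moment_even_polynomial_general n hn0
end

section
/- For every p with 2 ≤ p < ∞, the function f_p(λ) = λ^{p−1} − λ^2 + λ − 1 + (1−λ)^p satisfies 1 + e^{−λ} f_p(λ) > 0 for all λ ∈ [0, 1]. -/
/-! Since `λ - λ² ≥ 0` on `[0,1]` and at least one of `λ`, `1 - λ` is positive, `f_p(λ) + 1 ≥
λ^(p-1) + (1-λ)^p > 0`. Writing `1 + e f = (1 - e) + e (1 + f)` with `e = e^(-λ) ∈ (0,1]` then gives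
positivity. -/

open Real

theorem one_add_mul_pos_of_neg_one_lt {α : Type*} [Field α] [LinearOrder α] [IsStrictOrderedRing α]
    {e f : α} (he₀ : 0 < e) (he₁ : e ≤ 1) (hf : -1 < f) : 0 < 1 + e * f := by
  have h : 1 + e * f = (1 - e) + e * (1 + f) := by ring
  rw [h]
  exact add_pos_of_nonneg_of_pos (sub_nonneg.mpr he₁) (mul_pos he₀ (by linarith))

theorem Real.rpow_add_one_sub_rpow_pos {x : ℝ} (a b : ℝ) (hx₀ : 0 ≤ x) (hx₁ : x ≤ 1) :
    0 < x ^ a + (1 - x) ^ b := by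
  rcases hx₀.lt_or_eq with hx | rfl
  · exact add_pos_of_pos_of_nonneg (rpow_pos_of_pos hx a) (rpow_nonneg (by linarith) b)
  · simpa using add_pos_of_nonneg_of_pos (rpow_nonneg le_rfl a) zero_lt_one

theorem neg_one_lt_rpow_sub_sq_add_sub_one_add_rpow (p : ℝ) {x : ℝ} (hx₀ : 0 ≤ x) (hx₁ : x ≤ 1) :
    -1 < x ^ (p - 1) - x ^ 2 + x - 1 + (1 - x) ^ p := by
  have hquad : 0 ≤ x * (1 - x) := mul_nonneg hx₀ (by linarith)
  nlinarith [rpow_add_one_sub_rpow_pos (p - 1) p hx₀ hx₁]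

theorem one_add_exp_neg_mul_fp_pos_general (p : ℝ)
    (lam : ℝ) (h0 : 0 ≤ lam) (h1 : lam ≤ 1) :
    0 < 1 + Real.exp (-lam) *
      (lam ^ (p - 1) - lam ^ 2 + lam - 1 + (1 - lam) ^ p) :=
  one_add_mul_pos_of_neg_one_lt (exp_pos _) (exp_le_one_iff.mpr (neg_nonpos.mpr h0))
    (neg_one_lt_rpow_sub_sq_add_sub_one_add_rpow p h0 h1)

/-- For `2 ≤ p < ∞`, the function `f_p(λ) = λ^(p-1) - λ² + λ - 1 + (1-λ)^p`
satisfies `1 + e^(-λ) f_p(λ) > 0` for all `λ ∈ [0,1]`. -/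
theorem one_add_exp_neg_mul_fp_pos (p : ℝ) (hp : 2 ≤ p)
    (lam : ℝ) (h0 : 0 ≤ lam) (h1 : lam ≤ 1) :
    0 < 1 + Real.exp (-lam) *
      (lam ^ (p - 1) - lam ^ 2 + lam - 1 + (1 - lam) ^ p) :=
  one_add_exp_neg_mul_fp_pos_general p lam h0 h1
end

section
/- Let 1 ≤ p < ∞, X a Banach space, and let ξ_1, …, ξ_n be independent mean-zero X-valued random variables in L^p. Then (E max_i ‖ξ_i‖_X^p)^{1/p} ≤ 2^{1+1/p} (E‖Σ_i ξ_i‖_X^p)^{1/p}. -/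
/-!
Let `W_s = ∑_{j ∉ s} ξ_j - ∑_{j ∈ s} ξ_j` be the Rademacher sum `∑ r_j ξ_j` whose signs are `-1`
exactly on `s`. Flipping the sign at `i` changes `W_s` by `± 2 ξ_i`, so
`‖ξ_i‖ ^ p ≤ ‖W_s‖ ^ p + ‖W_{s ∆ {i}}‖ ^ p`, and averaging over `s` gives, pointwise,
`max_i ‖ξ_i‖ ^ p ≤ 2 𝔼_s ‖W_s‖ ^ p`.

For independent mean-zero summands, a partial sum `∑_{j ∈ s} ξ_j` is the conditional expectation
of the full sum given `(ξ_j)_{j ∈ s}`, and conditional expectation contracts `L^p`. Hence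
`‖W_s‖_p ≤ 2 ‖∑ ξ_j‖_p` by the triangle inequality, and
`E max_i ‖ξ_i‖ ^ p ≤ 2 ^ (p + 1) E ‖∑ ξ_j‖ ^ p`.
-/

open MeasureTheory ProbabilityTheory Real
open scoped BigOperators ENNReal symmDiff

section

variable {ι Ω E : Type*} [NormedAddCommGroup E]

lemma rpow_le_rpow_add_rpow_of_two_mul_le {a b c p : ℝ} (ha : 0 ≤ a) (hb : 0 ≤ b) (hc : 0 ≤ c)
    (hp : 0 ≤ p) (h : 2 * a ≤ b + c) : a ^ p ≤ b ^ p + c ^ p := by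
  rcases le_total b c with hbc | hcb
  · have : a ^ p ≤ c ^ p := rpow_le_rpow ha (by linarith) hp
    linarith [rpow_nonneg hb p]
  · have : a ^ p ≤ b ^ p := rpow_le_rpow ha (by linarith) hp
    linarith [rpow_nonneg hc p]

lemma integrable_expect [MeasurableSpace Ω] {μ : Measure Ω} {s : Finset ι}
    {f : ι → Ω → ℝ} (hf : ∀ i ∈ s, Integrable (f i) μ) :
    Integrable (fun ω => 𝔼 i ∈ s, f i ω) μ := by
  simp_rw [Finset.expect_eq_sum_div_card]
  exact (integrable_finsetSum s hf).div_const _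

lemma integral_expect [MeasurableSpace Ω] {μ : Measure Ω} {s : Finset ι}
    {f : ι → Ω → ℝ} (hf : ∀ i ∈ s, Integrable (f i) μ) :
    ∫ ω, 𝔼 i ∈ s, f i ω ∂μ = 𝔼 i ∈ s, ∫ ω, f i ω ∂μ := by
  simp_rw [Finset.expect_eq_sum_div_card]
  rw [integral_div, integral_finsetSum s hf]

lemma integral_norm_rpow_eq_lpNorm_rpow [MeasurableSpace Ω] {μ : Measure Ω} {f : Ω → E}
    (hf : AEStronglyMeasurable f μ) {p : ℝ} (hp : 0 < p) :
    ∫ ω, ‖f ω‖ ^ p ∂μ = lpNorm f (ENNReal.ofReal p) μ ^ p := by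
  rw [lpNorm_eq_integral_norm_rpow_toReal (by simpa using hp) ENNReal.ofReal_ne_top hf,
    ENNReal.toReal_ofReal hp.le, ← rpow_mul (integral_nonneg fun _ => by positivity),
    inv_mul_cancel₀ hp.ne', rpow_one]

lemma stronglyMeasurable_comap_self [MeasurableSpace E] [BorelSpace E] [MeasurableSpace Ω]
    {f : Ω → E} (hf : StronglyMeasurable f) :
    StronglyMeasurable[MeasurableSpace.comap f inferInstance] f :=
  stronglyMeasurable_iff_measurable_separable.2 ⟨comap_measurable f, hf.isSeparable_range⟩

variable [NormedSpace ℝ E]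

section SignedSum

variable [Fintype ι] [DecidableEq ι]

def signedSum (s : Finset ι) (v : ι → E) : E := ∑ j ∈ sᶜ, v j - ∑ j ∈ s, v j

lemma signedSum_sub_signedSum_insert {s : Finset ι} {i : ι} (hi : i ∉ s) (v : ι → E) :
    signedSum s v - signedSum (insert i s) v = (2 : ℝ) • v i := by
  rw [signedSum, signedSum, Finset.sum_insert hi, Finset.compl_insert,
    ← Finset.add_sum_erase _ _ (Finset.mem_compl.2 hi), two_smul]
  abel

lemma norm_signedSum_sub_signedSum_symmDiff_singleton (s : Finset ι) (i : ι) (v : ι → E) :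
    ‖signedSum s v - signedSum (s ∆ {i}) v‖ = 2 * ‖v i‖ := by
  by_cases hi : i ∈ s
  · have hs : s ∆ {i} = s.erase i := by
      ext j; by_cases hj : j = i <;> simp [Finset.mem_symmDiff, hj, hi]
    have h := signedSum_sub_signedSum_insert (Finset.notMem_erase i s) v
    rw [Finset.insert_erase hi] at h
    rw [hs, norm_sub_rev, h, norm_smul, Real.norm_two]
  · have hs : s ∆ {i} = insert i s := by
      ext j; by_cases hj : j = i <;> simp [Finset.mem_symmDiff, hj, hi]
    rw [hs, signedSum_sub_signedSum_insert hi, norm_smul, Real.norm_two]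

lemma norm_rpow_le_two_mul_expect_signedSum (v : ι → E) (i : ι) {p : ℝ} (hp : 0 ≤ p) :
    ‖v i‖ ^ p ≤ 2 * 𝔼 s, ‖signedSum s v‖ ^ p := by
  have hflip : Function.Involutive (· ∆ {i} : Finset ι → Finset ι) := fun s =>
    symmDiff_symmDiff_cancel_right _ _
  calc ‖v i‖ ^ p = 𝔼 _s : Finset ι, ‖v i‖ ^ p := (Fintype.expect_const _).symm
    _ ≤ 𝔼 s, (‖signedSum s v‖ ^ p + ‖signedSum (s ∆ {i}) v‖ ^ p) :=
        Finset.expect_le_expect fun s _ => rpow_le_rpow_add_rpow_of_two_mul_le (norm_nonneg _)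
          (norm_nonneg _) (norm_nonneg _) hp
          ((norm_signedSum_sub_signedSum_symmDiff_singleton s i v).symm.trans_le
            (norm_sub_le _ _))
    _ = 2 * 𝔼 s, ‖signedSum s v‖ ^ p := by
        rw [Finset.expect_add_distrib, Fintype.expect_bijective _ hflip.bijective _
          (fun s => ‖signedSum s v‖ ^ p) fun _ => rfl]
        ring

lemma iSup_norm_rpow_le_two_mul_expect_signedSum (v : ι → E) {p : ℝ} (hp : 0 < p) :
    (⨆ i, ‖v i‖) ^ p ≤ 2 * 𝔼 s, ‖signedSum s v‖ ^ p := by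
  cases isEmpty_or_nonempty ι
  · rw [Real.iSup_of_isEmpty, zero_rpow hp.ne']
    exact mul_nonneg zero_le_two (Finset.expect_nonneg fun s _ => by positivity)
  · obtain ⟨i, hi⟩ := exists_eq_ciSup_of_finite (f := fun i => ‖v i‖)
    rw [← hi]
    exact norm_rpow_le_two_mul_expect_signedSum v i hp.le

end SignedSum

variable [CompleteSpace E]

theorem eLpNorm_le_eLpNorm_add_of_indep {m₁ m₂ m : MeasurableSpace Ω} {μ : Measure Ω}
    [IsFiniteMeasure μ] {f g : Ω → E} (hle₁ : m₁ ≤ m) (hle₂ : m₂ ≤ m) (hindep : Indep m₁ m₂ μ)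
    (hf : StronglyMeasurable[m₁] f) (hg : StronglyMeasurable[m₂] g) (hfi : Integrable f μ)
    (hgi : Integrable g μ) (hf₀ : ∫ ω, f ω ∂μ = 0) {p : ℝ≥0∞} (hp : 1 ≤ p) :
    eLpNorm g p μ ≤ eLpNorm (f + g) p μ := by
  have hcond : μ[f + g | m₂] =ᵐ[μ] g := by
    filter_upwards [condExp_add hfi hgi m₂, condExp_indep_eq hle₁ hle₂ hf hindep] with ω h₁ h₂
    rw [h₁, Pi.add_apply, h₂, hf₀, condExp_of_stronglyMeasurable hle₂ hg hgi, zero_add]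
  calc eLpNorm g p μ = eLpNorm (μ[f + g | m₂]) p μ := eLpNorm_congr_ae hcond.symm
    _ ≤ eLpNorm (f + g) p μ := eLpNorm_condExp_le_eLpNorm _ hp

theorem eLpNorm_sum_le_eLpNorm_sum_of_iIndepFun [Fintype ι] [MeasurableSpace E] [BorelSpace E]
    {m : MeasurableSpace Ω} {μ : Measure Ω} [IsProbabilityMeasure μ] {ξ : ι → Ω → E}
    (hindep : iIndepFun ξ μ) (hint : ∀ i, Integrable (ξ i) μ)
    (hmean : ∀ i, ∫ ω, ξ i ω ∂μ = 0) (s : Finset ι) {p : ℝ≥0∞} (hp : 1 ≤ p) :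
    eLpNorm (fun ω => ∑ i ∈ s, ξ i ω) p μ ≤ eLpNorm (fun ω => ∑ i, ξ i ω) p μ := by
  classical
  -- For non-separable `E`, a measurable `ξ i` need not be strongly measurable for `σ(ξ i)`.
  wlog hsm : ∀ i, StronglyMeasurable (ξ i) generalizing ξ
  · have hmk (i : ι) : ξ i =ᵐ[μ] (hint i).1.mk (ξ i) := (hint i).1.ae_eq_mk
    have hsum (t : Finset ι) :
        (fun ω => ∑ i ∈ t, ξ i ω) =ᵐ[μ] fun ω => ∑ i ∈ t, (hint i).1.mk (ξ i) ω := by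
      filter_upwards [ae_all_iff.2 hmk] with ω hω
      simp only [hω]
    rw [eLpNorm_congr_ae (hsum s), eLpNorm_congr_ae (hsum Finset.univ)]
    exact this (hindep.congr hmk) (fun i => (hint i).congr (hmk i))
      (fun i => (integral_congr_ae (hmk i)).symm.trans (hmean i))
      fun i => (hint i).1.stronglyMeasurable_mk
  let mξ (t : Finset ι) : MeasurableSpace Ω := ⨆ i ∈ t, MeasurableSpace.comap (ξ i) inferInstance
  have hle (t : Finset ι) : mξ t ≤ m := iSup₂_le fun i _ => (hsm i).measurable.comap_le
  have hpartial (t : Finset ι) : StronglyMeasurable[mξ t] (fun ω => ∑ i ∈ t, ξ i ω) :=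
    Finset.stronglyMeasurable_fun_sum t fun i hi =>
      (stronglyMeasurable_comap_self (hsm i)).mono (le_iSup₂_of_le i hi le_rfl)
  have hindep_parts : Indep (mξ sᶜ) (mξ s) μ := by
    refine indep_iSup_of_disjoint (fun i => (hsm i).measurable.comap_le)
      ((iIndepFun_iff_iIndep _ _ _).1 hindep) ?_
    simpa using disjoint_compl_left
  have hint_sum (t : Finset ι) : Integrable (fun ω => ∑ i ∈ t, ξ i ω) μ :=
    integrable_finsetSum t fun i _ => hint i
  have key := eLpNorm_le_eLpNorm_add_of_indep (hle sᶜ) (hle s) hindep_parts (hpartial sᶜ)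
    (hpartial s) (hint_sum sᶜ) (hint_sum s)
    (by rw [integral_finsetSum _ fun i _ => hint i]; simp [hmean]) hp
  convert key using 2
  exact funext fun ω => (Finset.sum_compl_add_sum s fun i => ξ i ω).symm

theorem lpNorm_signedSum_le [Fintype ι] [DecidableEq ι] [MeasurableSpace E] [BorelSpace E]
    [MeasurableSpace Ω] {μ : Measure Ω} [IsProbabilityMeasure μ] {ξ : ι → Ω → E}
    {p : ℝ≥0∞} (hp : 1 ≤ p) (hindep : iIndepFun ξ μ) (hξ : ∀ i, MemLp (ξ i) p μ)
    (hmean : ∀ i, ∫ ω, ξ i ω ∂μ = 0) (s : Finset ι) :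
    lpNorm (fun ω => signedSum s (ξ · ω)) p μ ≤ 2 * lpNorm (fun ω => ∑ i, ξ i ω) p μ := by
  have hsum (t : Finset ι) : MemLp (fun ω => ∑ i ∈ t, ξ i ω) p μ :=
    memLp_finsetSum t fun i _ => hξ i
  have hle (t : Finset ι) :
      lpNorm (fun ω => ∑ i ∈ t, ξ i ω) p μ ≤ lpNorm (fun ω => ∑ i, ξ i ω) p μ := by
    rw [← toReal_eLpNorm (hsum t).1, ← toReal_eLpNorm (hsum _).1]
    exact ENNReal.toReal_mono (hsum _).eLpNorm_ne_top <| eLpNorm_sum_le_eLpNorm_sum_of_iIndepFun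
      hindep (fun i => (hξ i).integrable hp) hmean t hp
  calc lpNorm (fun ω => signedSum s (ξ · ω)) p μ
      = lpNorm ((fun ω => ∑ i ∈ sᶜ, ξ i ω) - fun ω => ∑ i ∈ s, ξ i ω) p μ := rfl
    _ ≤ lpNorm (fun ω => ∑ i ∈ sᶜ, ξ i ω) p μ + lpNorm (fun ω => ∑ i ∈ s, ξ i ω) p μ :=
        lpNorm_sub_le (hsum sᶜ) hp
    _ ≤ 2 * lpNorm (fun ω => ∑ i, ξ i ω) p μ := by linarith [hle sᶜ, hle s]

theorem integral_iSup_norm_rpow_le [Fintype ι] [MeasurableSpace E] [BorelSpace E]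
    [MeasurableSpace Ω] {μ : Measure Ω} [IsProbabilityMeasure μ] {ξ : ι → Ω → E} {p : ℝ}
    (hp : 1 ≤ p) (hindep : iIndepFun ξ μ) (hξ : ∀ i, MemLp (ξ i) (ENNReal.ofReal p) μ)
    (hmean : ∀ i, ∫ ω, ξ i ω ∂μ = 0) :
    ∫ ω, (⨆ i, ‖ξ i ω‖) ^ p ∂μ ≤
      2 ^ (p + 1) * lpNorm (fun ω => ∑ i, ξ i ω) (ENNReal.ofReal p) μ ^ p := by
  classical
  have hp₀ : 0 < p := by linarith
  set L := lpNorm (fun ω => ∑ i, ξ i ω) (ENNReal.ofReal p) μ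
  have hW (s : Finset ι) : MemLp (fun ω => signedSum s (ξ · ω)) (ENNReal.ofReal p) μ :=
    (memLp_finsetSum _ fun i _ => hξ i).sub (memLp_finsetSum _ fun i _ => hξ i)
  have hWint (s : Finset ι) : Integrable (fun ω => ‖signedSum s (ξ · ω)‖ ^ p) μ := by
    simpa [hp₀.le] using (hW s).integrable_norm_rpow'
  calc ∫ ω, (⨆ i, ‖ξ i ω‖) ^ p ∂μ
      ≤ ∫ ω, 2 * 𝔼 s, ‖signedSum s (ξ · ω)‖ ^ p ∂μ :=
        integral_mono_of_nonneg
          (ae_of_all _ fun ω => rpow_nonneg (iSup_nonneg fun i => norm_nonneg _) _)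
          ((integrable_expect fun s _ => hWint s).const_mul 2)
          (ae_of_all _ fun ω => iSup_norm_rpow_le_two_mul_expect_signedSum _ hp₀)
    _ = 2 * 𝔼 s, lpNorm (fun ω => signedSum s (ξ · ω)) (ENNReal.ofReal p) μ ^ p := by
        rw [integral_const_mul, integral_expect fun s _ => hWint s]
        simp_rw [integral_norm_rpow_eq_lpNorm_rpow (hW _).1 hp₀]
    _ ≤ 2 * 𝔼 _s : Finset ι, (2 * L) ^ p := by
        gcongr with s
        exacts [lpNorm_nonneg, lpNorm_signedSum_le (by simpa using ENNReal.ofReal_le_ofReal hp)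
          hindep hξ hmean s]
    _ = 2 ^ (p + 1) * L ^ p := by
        rw [Fintype.expect_const, mul_rpow zero_le_two lpNorm_nonneg, rpow_add_one two_ne_zero]
        ring

end

theorem max_moment_le_sum_moment_general (p : ℝ) (hp : 1 ≤ p)
    (X : Type) [NormedAddCommGroup X] [NormedSpace ℝ X] [CompleteSpace X]
    [MeasurableSpace X] [BorelSpace X]
    (Ω : Type) [MeasurableSpace Ω] (P : Measure Ω) [IsProbabilityMeasure P]
    (n : ℕ) (ξ : Fin n → Ω → X)
    (hindep : iIndepFun ξ P)
    (hmean : ∀ i, ∫ ω, ξ i ω ∂P = 0)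
    (hLp : ∀ i, MemLp (ξ i) (ENNReal.ofReal p) P) :
    (∫ ω, (⨆ i, ‖ξ i ω‖) ^ p ∂P) ^ (1/p) ≤
      (2:ℝ) ^ (1 + 1/p) * (∫ ω, ‖∑ i, ξ i ω‖ ^ p ∂P) ^ (1/p) := by
  have hp₀ : 0 < p := by linarith
  have hL : (∫ ω, ‖∑ i, ξ i ω‖ ^ p ∂P) ^ (1 / p) =
      lpNorm (fun ω => ∑ i, ξ i ω) (ENNReal.ofReal p) P := by
    rw [integral_norm_rpow_eq_lpNorm_rpow (memLp_finsetSum _ fun i _ => hLp i).1 hp₀, one_div,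
      rpow_rpow_inv lpNorm_nonneg hp₀.ne']
  calc (∫ ω, (⨆ i, ‖ξ i ω‖) ^ p ∂P) ^ (1 / p)
      ≤ (2 ^ (p + 1) * lpNorm (fun ω => ∑ i, ξ i ω) (ENNReal.ofReal p) P ^ p) ^ (1 / p) :=
        rpow_le_rpow (integral_nonneg fun ω => rpow_nonneg (iSup_nonneg fun i => norm_nonneg _) _)
          (integral_iSup_norm_rpow_le hp hindep hLp hmean) (by positivity)
    _ = (2:ℝ) ^ (1 + 1 / p) * (∫ ω, ‖∑ i, ξ i ω‖ ^ p ∂P) ^ (1 / p) := by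
        rw [hL, mul_rpow (by positivity) (rpow_nonneg lpNorm_nonneg _), ← rpow_mul zero_le_two,
          ← rpow_mul lpNorm_nonneg, mul_one_div_cancel hp₀.ne', rpow_one]
        congr 2
        field_simp

/-- For independent mean-zero `X`-valued random variables `ξ_1, …, ξ_n` in `L^p`
(`1 ≤ p < ∞`, `X` a Banach space),
`(E max_i ‖ξ_i‖^p)^{1/p} ≤ 2^{1+1/p} (E ‖∑ ξ_i‖^p)^{1/p}`. -/
theorem max_moment_le_sum_moment (p : ℝ) (hp : 1 ≤ p)
    (X : Type) [NormedAddCommGroup X] [NormedSpace ℝ X] [CompleteSpace X]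
    [MeasurableSpace X] [BorelSpace X]
    (Ω : Type) [MeasurableSpace Ω] (P : Measure Ω) [IsProbabilityMeasure P]
    (n : ℕ) (ξ : Fin n → Ω → X)
    (hmeas : ∀ i, Measurable (ξ i))
    (hindep : iIndepFun ξ P)
    (hint : ∀ i, Integrable (ξ i) P)
    (hmean : ∀ i, ∫ ω, ξ i ω ∂P = 0)
    (hLp : ∀ i, MemLp (ξ i) (ENNReal.ofReal p) P) :
    (∫ ω, (⨆ i, ‖ξ i ω‖) ^ p ∂P) ^ (1/p) ≤
      (2:ℝ) ^ (1 + 1/p) * (∫ ω, ‖∑ i, ξ i ω‖ ^ p ∂P) ^ (1/p) :=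
  max_moment_le_sum_moment_general p hp X Ω P n ξ hindep hmean hLp
end

section
/- Let 1 ≤ p < ∞ and let f_1, …, f_n be independent nonnegative real random variables in L^p. Then (E(Σ_i f_i)^p)^{1/p} ≤ C_p max{ (Σ_i E f_i^p)^{1/p}, Σ_i E f_i } for a constant C_p depending only on p. -/
/-!
With `K = p 2^(p-1)`, the elementary inequality `(x + y)^p ≤ x^p + K (x^(p-1) y + y^p)` applied
along the partial sums, together with independence of each partial sum from the next summand,
gives `E S^p ≤ K ∑ E f_i^p + K E S^(p-1) ∑ E f_i`. By Jensen, `E S^(p-1) ≤ M^(p-1)` for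
`M = (E S^p)^(1/p)`, so `M^p ≤ K b^p + K M^(p-1) a` with `b^p = ∑ E f_i^p` and `a = ∑ E f_i`;
if `M > max b a`, dividing by `M^(p-1)` yields `M ≤ 2 K max b a`.
-/

open MeasureTheory ProbabilityTheory Real

lemma add_rpow_le_rpow_add_mul_rpow_sub_one {p x y : ℝ} (hp : 1 ≤ p) (hx : 0 ≤ x) (hy : 0 ≤ y) :
    (x + y) ^ p ≤ x ^ p + p * (x + y) ^ (p - 1) * y := by
  rcases (add_nonneg hx hy).eq_or_lt with h | ha
  · obtain ⟨rfl, rfl⟩ : x = 0 ∧ y = 0 := ⟨by linarith, by linarith⟩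
    simp
  set a := x + y
  -- Bernoulli's inequality `1 + p s ≤ (1 + s) ^ p` at `s = -y / a`, multiplied by `a ^ p`.
  have hbern : 1 + p * (-(y / a)) ≤ (x / a) ^ p := by
    have hs : -1 ≤ -(y / a) := by rw [neg_le_neg_iff, div_le_one ha]; linarith
    convert one_add_mul_self_le_rpow_one_add hs hp using 2
    field_simp
    ring
  rw [div_rpow hx ha.le, le_div_iff₀ (rpow_pos_of_pos ha p)] at hbern
  have hsub : a ^ (p - 1) = a ^ p / a := by rw [rpow_sub ha, rpow_one]
  rw [hsub]
  field_simp at hbern ⊢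
  linarith

lemma add_rpow_le_two_rpow_mul_add {q x y : ℝ} (hq : 0 ≤ q) (hx : 0 ≤ x) (hy : 0 ≤ y) :
    (x + y) ^ q ≤ 2 ^ q * (x ^ q + y ^ q) := by
  calc (x + y) ^ q ≤ (2 * max x y) ^ q :=
        rpow_le_rpow (by positivity) (by linarith [le_max_left x y, le_max_right x y]) hq
    _ = 2 ^ q * max x y ^ q := mul_rpow zero_le_two (le_max_of_le_left hx)
    _ ≤ 2 ^ q * (x ^ q + y ^ q) := by
        gcongr
        rcases le_total x y with h | h
        · rw [max_eq_right h]; linarith [rpow_nonneg hx q]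
        · rw [max_eq_left h]; linarith [rpow_nonneg hy q]

lemma add_rpow_le_rpow_add_mul {p x y : ℝ} (hp : 1 ≤ p) (hx : 0 ≤ x) (hy : 0 ≤ y) :
    (x + y) ^ p ≤ x ^ p + p * 2 ^ (p - 1) * (x ^ (p - 1) * y + y ^ p) := by
  have hy_rpow : y ^ (p - 1) * y = y ^ p := by
    rw [← rpow_add_one' hy (by linarith), sub_add_cancel]
  have h2 := add_rpow_le_two_rpow_mul_add (by linarith : 0 ≤ p - 1) hx hy
  calc (x + y) ^ p ≤ x ^ p + p * (x + y) ^ (p - 1) * y :=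
        add_rpow_le_rpow_add_mul_rpow_sub_one hp hx hy
    _ ≤ x ^ p + p * (2 ^ (p - 1) * (x ^ (p - 1) + y ^ (p - 1))) * y := by gcongr
    _ = x ^ p + p * 2 ^ (p - 1) * (x ^ (p - 1) * y + y ^ p) := by rw [← hy_rpow]; ring

lemma le_two_mul_max_of_rpow_le {p K M a b : ℝ} (hp : 1 ≤ p) (hK : 1 ≤ 2 * K) (hM : 0 ≤ M)
    (ha : 0 ≤ a) (hb : 0 ≤ b) (h : M ^ p ≤ K * b ^ p + K * M ^ (p - 1) * a) :
    M ≤ 2 * K * max b a := by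
  set R := max b a
  have hR : 0 ≤ R := le_max_of_le_right ha
  rcases le_or_gt M R with hMR | hRM
  · nlinarith
  have hM0 : 0 < M := hR.trans_lt hRM
  have hsplit : ∀ {z : ℝ}, 0 ≤ z → z ^ p = z ^ (p - 1) * z := fun hz => by
    rw [← rpow_add_one' hz (by linarith), sub_add_cancel]
  have hbp : b ^ p ≤ M ^ (p - 1) * R := by
    rw [hsplit hb]
    exact mul_le_mul (rpow_le_rpow hb ((le_max_left b a).trans hRM.le) (by linarith))
      (le_max_left b a) hb (rpow_nonneg hM _)
  have hMp : 0 < M ^ (p - 1) := rpow_pos_of_pos hM0 _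
  have hK0 : 0 < K := by linarith
  rw [hsplit hM] at h
  refine le_of_mul_le_mul_left ?_ hMp
  nlinarith [mul_le_mul_of_nonneg_left hbp hK0.le,
    mul_le_mul_of_nonneg_left (le_max_right b a) (mul_nonneg hK0.le hMp.le)]

section Moments

variable {Ω : Type*} [MeasurableSpace Ω] {P : Measure Ω}

lemma MeasureTheory.MemLp.integrable_rpow_of_nonneg [IsFiniteMeasure P] {g : Ω → ℝ} {p q : ℝ}
    (hg : MemLp g (ENNReal.ofReal p) P) (hg0 : ∀ ω, 0 ≤ g ω) (hq : 0 ≤ q) (hqp : q ≤ p) :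
    Integrable (fun ω => g ω ^ q) P := by
  have hp : 0 ≤ p := hq.trans hqp
  have hgp := hg.integrable_norm_rpow'
  rw [ENNReal.toReal_ofReal hp] at hgp
  simpa only [norm_of_nonneg (hg0 _)] using integrable_norm_rpow_of_le hg.1 hq hp hqp hgp

lemma integral_rpow_sub_one_le [IsProbabilityMeasure P] {g : Ω → ℝ} {p : ℝ} (hp : 1 ≤ p)
    (hg : MemLp g (ENNReal.ofReal p) P) (hg0 : ∀ ω, 0 ≤ g ω) :
    ∫ ω, g ω ^ (p - 1) ∂P ≤ (∫ ω, g ω ^ p ∂P) ^ ((p - 1) / p) := by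
  have hp0 : 0 < p := by linarith
  have hr0 : 0 ≤ (p - 1) / p := div_nonneg (by linarith) hp0.le
  have hr1 : (p - 1) / p ≤ 1 := (div_le_one hp0).2 (by linarith)
  have hpow : ∀ ω, (g ω ^ p) ^ ((p - 1) / p) = g ω ^ (p - 1) := fun ω => by
    rw [← rpow_mul (hg0 ω), mul_div_cancel₀ _ hp0.ne']
  have hjensen := (concaveOn_rpow hr0 hr1).le_map_integral
    (continuousOn_id.rpow_const fun _ _ => Or.inr hr0) isClosed_Ici
    (ae_of_all _ fun ω => rpow_nonneg (hg0 ω) p)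
    (hg.integrable_rpow_of_nonneg hg0 hp0.le le_rfl)
    (by simpa only [Function.comp_def, hpow] using
      hg.integrable_rpow_of_nonneg hg0 (by linarith) (by linarith))
  simpa only [hpow] using hjensen

lemma integral_add_rpow_le_of_indepFun [IsFiniteMeasure P] {X Y : Ω → ℝ} {p : ℝ} (hp : 1 ≤ p)
    (hXY : IndepFun X Y P) (hX : MemLp X (ENNReal.ofReal p) P) (hY : MemLp Y (ENNReal.ofReal p) P)
    (hX0 : ∀ ω, 0 ≤ X ω) (hY0 : ∀ ω, 0 ≤ Y ω) :
    ∫ ω, (X ω + Y ω) ^ p ∂P ≤ ∫ ω, X ω ^ p ∂P +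
      p * 2 ^ (p - 1) * ((∫ ω, X ω ^ (p - 1) ∂P) * (∫ ω, Y ω ∂P) + ∫ ω, Y ω ^ p ∂P) := by
  have hXp := hX.integrable_rpow_of_nonneg hX0 (by linarith) le_rfl
  have hYp := hY.integrable_rpow_of_nonneg hY0 (by linarith) le_rfl
  have hXq := hX.integrable_rpow_of_nonneg hX0 (by linarith) (by linarith : p - 1 ≤ p)
  have hY1 : Integrable Y P := by
    simpa using hY.integrable_rpow_of_nonneg hY0 zero_le_one hp
  have hind : IndepFun (fun ω => X ω ^ (p - 1)) Y P :=
    hXY.comp (measurable_id.pow_const (p - 1)) measurable_id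
  have hmul : Integrable (fun ω => X ω ^ (p - 1) * Y ω) P := hind.integrable_mul hXq hY1
  have hrest : Integrable (fun ω => p * 2 ^ (p - 1) * (X ω ^ (p - 1) * Y ω + Y ω ^ p)) P :=
    (hmul.add hYp).const_mul _
  calc ∫ ω, (X ω + Y ω) ^ p ∂P
      ≤ ∫ ω, (X ω ^ p + p * 2 ^ (p - 1) * (X ω ^ (p - 1) * Y ω + Y ω ^ p)) ∂P :=
        integral_mono_of_nonneg (ae_of_all _ fun ω => rpow_nonneg (add_nonneg (hX0 ω) (hY0 ω)) p)
          (hXp.add hrest)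
          (ae_of_all _ fun ω => add_rpow_le_rpow_add_mul hp (hX0 ω) (hY0 ω))
    _ = _ := by
        rw [integral_add hXp hrest, integral_const_mul,
          integral_add hmul hYp,
          hind.integral_fun_mul_eq_mul_integral hXq.aestronglyMeasurable hY1.aestronglyMeasurable]

end Moments

section Sums

variable {Ω ι : Type*} [MeasurableSpace Ω] {P : Measure Ω} [IsFiniteMeasure P]

lemma integral_sum_rpow_le [Fintype ι] {f : ι → Ω → ℝ} {p : ℝ} (hp : 1 ≤ p)
    (hindep : iIndepFun f P) (hf : ∀ i, MemLp (f i) (ENNReal.ofReal p) P)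
    (hf0 : ∀ i ω, 0 ≤ f i ω) :
    ∫ ω, (∑ i, f i ω) ^ p ∂P ≤ p * 2 ^ (p - 1) * ∑ i, ∫ ω, f i ω ^ p ∂P +
      p * 2 ^ (p - 1) * (∫ ω, (∑ i, f i ω) ^ (p - 1) ∂P) * ∑ i, ∫ ω, f i ω ∂P := by
  classical
  set K := p * 2 ^ (p - 1)
  set c := ∫ ω, (∑ i, f i ω) ^ (p - 1) ∂P
  have hK : 0 ≤ K := by positivity
  have hS0 (s : Finset ι) (ω : Ω) : 0 ≤ ∑ i ∈ s, f i ω := Finset.sum_nonneg fun i _ => hf0 i ω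
  have hS (s : Finset ι) : MemLp (fun ω => ∑ i ∈ s, f i ω) (ENNReal.ofReal p) P :=
    memLp_finsetSum s fun i _ => hf i
  have hc (s : Finset ι) : ∫ ω, (∑ i ∈ s, f i ω) ^ (p - 1) ∂P ≤ c :=
    integral_mono ((hS s).integrable_rpow_of_nonneg (hS0 s) (by linarith) (by linarith))
      ((hS _).integrable_rpow_of_nonneg (hS0 _) (by linarith) (by linarith))
      fun ω => rpow_le_rpow (hS0 s ω) (Finset.sum_le_sum_of_subset_of_nonneg
        (Finset.subset_univ s) fun i _ _ => hf0 i ω) (by linarith)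
  suffices h : ∀ s : Finset ι, ∫ ω, (∑ i ∈ s, f i ω) ^ p ∂P ≤
      K * ∑ i ∈ s, ∫ ω, f i ω ^ p ∂P + K * c * ∑ i ∈ s, ∫ ω, f i ω ∂P from h Finset.univ
  intro s
  induction s using Finset.induction_on with
  | empty => simp [zero_rpow (by linarith : p ≠ 0)]
  | insert j s hj ih =>
    have hind : IndepFun (fun ω => ∑ i ∈ s, f i ω) (f j) P := by
      simpa only [Finset.sum_fn] using
        hindep.indepFun_finsetSum_of_notMem₀ (fun i => (hf i).aestronglyMeasurable.aemeasurable) hj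
    have hEf : 0 ≤ ∫ ω, f j ω ∂P := integral_nonneg (hf0 j)
    simp only [Finset.sum_insert hj, add_comm (f j _)]
    calc ∫ ω, (∑ i ∈ s, f i ω + f j ω) ^ p ∂P
        ≤ ∫ ω, (∑ i ∈ s, f i ω) ^ p ∂P + K * ((∫ ω, (∑ i ∈ s, f i ω) ^ (p - 1) ∂P) *
            (∫ ω, f j ω ∂P) + ∫ ω, f j ω ^ p ∂P) :=
          integral_add_rpow_le_of_indepFun hp hind (hS s) (hf j) (hS0 s) (hf0 j)
      _ ≤ (K * ∑ i ∈ s, ∫ ω, f i ω ^ p ∂P + K * c * ∑ i ∈ s, ∫ ω, f i ω ∂P) +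
            K * (c * (∫ ω, f j ω ∂P) + ∫ ω, f j ω ^ p ∂P) := by
          gcongr
          exact hc s
      _ = _ := by ring

end Sums

/-- Rosenthal's inequality for sums of independent nonnegative random variables:
for `1 ≤ p < ∞`, `(E (∑ f_i)^p)^{1/p} ≤ C_p max { (∑ E f_i^p)^{1/p}, ∑ E f_i }`. -/
theorem rosenthal_nonneg (p : ℝ) (hp : 1 ≤ p) :
    ∃ C : ℝ, 0 < C ∧
      ∀ (Ω : Type) [MeasurableSpace Ω] (P : Measure Ω) [IsProbabilityMeasure P]
        (n : ℕ) (f : Fin n → Ω → ℝ),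
        (∀ i, Measurable (f i)) →
        iIndepFun f P →
        (∀ i ω, 0 ≤ f i ω) →
        (∀ i, MemLp (f i) (ENNReal.ofReal p) P) →
        (∫ ω, (∑ i, f i ω) ^ p ∂P) ^ (1/p) ≤
          C * max ((∑ i, ∫ ω, f i ω ^ p ∂P) ^ (1/p)) (∑ i, ∫ ω, f i ω ∂P) := by
  have hp0 : 0 < p := by linarith
  refine ⟨p * 2 ^ p, by positivity, fun Ω _ P _ n f _ hindep hf0 hf => ?_⟩
  set M := (∫ ω, (∑ i, f i ω) ^ p ∂P) ^ (1 / p)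
  set B := ∑ i, ∫ ω, f i ω ^ p ∂P
  have hS0 (ω : Ω) : 0 ≤ ∑ i, f i ω := Finset.sum_nonneg fun i _ => hf0 i ω
  have hI0 : 0 ≤ ∫ ω, (∑ i, f i ω) ^ p ∂P := integral_nonneg fun ω => rpow_nonneg (hS0 ω) p
  have hB0 : 0 ≤ B := Finset.sum_nonneg fun i _ => integral_nonneg fun ω => rpow_nonneg (hf0 i ω) p
  have hA0 : 0 ≤ ∑ i, ∫ ω, f i ω ∂P := Finset.sum_nonneg fun i _ => integral_nonneg (hf0 i)
  have hMp : M ^ p = ∫ ω, (∑ i, f i ω) ^ p ∂P := by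
    simp only [M, one_div]; exact rpow_inv_rpow hI0 hp0.ne'
  have hBp : (B ^ (1 / p)) ^ p = B := by rw [one_div, rpow_inv_rpow hB0 hp0.ne']
  have hjensen : ∫ ω, (∑ i, f i ω) ^ (p - 1) ∂P ≤ M ^ (p - 1) := by
    rw [← rpow_mul hI0, one_div_mul_eq_div]
    exact integral_rpow_sub_one_le hp (memLp_finsetSum _ fun i _ => hf i) hS0
  have hK : 1 ≤ 2 * (p * 2 ^ (p - 1)) := by
    nlinarith [one_le_rpow (by norm_num : (1 : ℝ) ≤ 2) (by linarith : 0 ≤ p - 1)]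
  have hbound := integral_sum_rpow_le hp hindep hf hf0
  calc M ≤ 2 * (p * 2 ^ (p - 1)) * max (B ^ (1 / p)) (∑ i, ∫ ω, f i ω ∂P) := by
        refine le_two_mul_max_of_rpow_le hp hK (by positivity) hA0 (by positivity) ?_
        rw [hMp, hBp]
        refine hbound.trans ?_
        gcongr
    _ = p * 2 ^ p * max (B ^ (1 / p)) (∑ i, ∫ ω, f i ω ∂P) := by
        rw [rpow_sub_one two_ne_zero]; ring
end
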